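/- arXiv:2412.01256 — 2 statements merged into one kernel-verified Lean document; each statement's English description precedes it below -/
import Mathlib

section
/- Let s ∈ ℝ^C be a probability vector. Then Σ_{y=1}^C ℓ_MAE(s, e_y) = 2(C − 1); i.e., the sum of the MAE loss over all possible one-hot labels is a constant independent of s. Hence MAE is a symmetric loss in the sense of Ghosh et al. -/
/-!
For the label `y`, the coordinate `y` contributes `1 - s y` (as `s y ≤ 1`) and every other
coordinate contributes `s c`, which add up to `1 - s y` as well; so the loss at `y` is
`2 (1 - s y)`, and summing over `y` uses `∑ s = 1` once more.
-/

open Finset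

variable {ι : Type*} [Fintype ι] {s : ι → ℝ}

lemma le_one_of_nonneg_of_sum_eq_one (hs : ∀ c, 0 ≤ s c) (hsum : ∑ c, s c = 1) (y : ι) :
    s y ≤ 1 :=
  hsum ▸ single_le_sum (fun c _ ↦ hs c) (mem_univ y)

lemma sum_abs_ite_sub_eq [DecidableEq ι] (hs : ∀ c, 0 ≤ s c) (hsum : ∑ c, s c = 1) (y : ι) :
    ∑ c, |(if c = y then (1 : ℝ) else 0) - s c| = 2 * (1 - s y) := by
  have hy : |1 - s y| = 1 - s y :=
    abs_of_nonneg (sub_nonneg.2 (le_one_of_nonneg_of_sum_eq_one hs hsum y))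
  have hcompl : ∑ c ∈ {y}ᶜ, |(if c = y then (1 : ℝ) else 0) - s c| = 1 - s y := by
    rw [← eq_sub_of_add_eq' ((Fintype.sum_eq_add_sum_compl y s).symm.trans hsum)]
    refine sum_congr rfl fun c hc ↦ ?_
    rw [if_neg (by simpa using hc), zero_sub, abs_neg, abs_of_nonneg (hs c)]
  rw [Fintype.sum_eq_add_sum_compl y, hcompl, if_pos rfl, hy]
  ring

open Finset in
/-- The MAE loss is symmetric: summing it over all one-hot labels gives the
constant `2(C - 1)`, independently of the probability vector `s`. -/
theorem mae_symmetric_loss (C : ℕ) (s : Fin C → ℝ) (hs : ∀ c, 0 ≤ s c)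
    (hsum : ∑ c, s c = 1) :
    ∑ y : Fin C, ∑ c : Fin C, |(if c = y then (1 : ℝ) else 0) - s c|
      = 2 * ((C : ℝ) - 1) := by
  simp only [sum_abs_ite_sub_eq hs hsum, ← mul_sum, sum_sub_distrib, hsum, sum_const,
    card_univ, Fintype.card_fin, nsmul_eq_mul, mul_one]
end

section
/- Fix s ∈ (1/2, 1). The cross-entropy task-relevant coefficient increment (1 − p)/s − p/(1 − s) is strictly positive if and only if p < 1 − s, whereas the MAE increment 2 − 4p is strictly positive for all p < 1/2. In particular, for every noise rate p with 1 − s < p < 1/2, the CE increment is strictly negative while the MAE increment is strictly positive. -/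
theorem ce_increment_eq {K : Type*} [Field K] {s p : K} (hs : s ≠ 0) (hs1 : s ≠ 1) :
    (1 - p) / s - p / (1 - s) = (1 - s - p) / (s * (1 - s)) := by
  have : 1 - s ≠ 0 := sub_ne_zero.mpr (Ne.symm hs1)
  field_simp
  ring

section CrossEntropyIncrementSign

variable {K : Type*} [Field K] [LinearOrder K] [IsStrictOrderedRing K] {s p : K}

theorem ce_increment_pos_iff (hs : 0 < s) (hs1 : s < 1) :
    0 < (1 - p) / s - p / (1 - s) ↔ p < 1 - s := by
  have hden : 0 < s * (1 - s) := mul_pos hs (sub_pos.mpr hs1)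
  rw [ce_increment_eq hs.ne' hs1.ne, div_pos_iff_of_pos_right hden, sub_pos]

theorem ce_increment_neg (hs : 0 < s) (hs1 : s < 1) (hp : 1 - s < p) :
    (1 - p) / s - p / (1 - s) < 0 := by
  have hden : 0 < s * (1 - s) := mul_pos hs (sub_pos.mpr hs1)
  rw [ce_increment_eq hs.ne' hs1.ne]
  exact div_neg_of_neg_of_pos (sub_neg.mpr hp) hden

end CrossEntropyIncrementSign

/-- Sign of the task-relevant coefficient increments: the CE increment
`(1-p)/s - p/(1-s)` is positive iff `p < 1 - s`, the MAE increment `2 - 4p`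
is positive for all `p < 1/2`, and for `1 - s < p < 1/2` the CE increment is
negative while the MAE increment is positive. -/
theorem ce_vs_mae_increments (s : ℝ) (hs : 1 / 2 < s) (hs1 : s < 1) :
    (∀ p : ℝ, 0 < (1 - p) / s - p / (1 - s) ↔ p < 1 - s) ∧
    (∀ p : ℝ, p < 1 / 2 → 0 < 2 - 4 * p) ∧
    (∀ p : ℝ, 1 - s < p → p < 1 / 2 →
      (1 - p) / s - p / (1 - s) < 0 ∧ 0 < 2 - 4 * p) := by
  have hs0 : 0 < s := by linarith
  have mae_pos : ∀ p : ℝ, p < 1 / 2 → 0 < 2 - 4 * p := fun p hp => by linarith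
  exact ⟨fun p => ce_increment_pos_iff hs0 hs1, mae_pos,
    fun p hp hp2 => ⟨ce_increment_neg hs0 hs1 hp, mae_pos p hp2⟩⟩
end
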